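/- Every root of the weighted matching polynomial μ(G) is real, and all roots lie in the closed interval [min_j r_j − 2·√(B_G), max_j r_j + 2·√(B_G)]. -/

import Mathlib

open Polynomial
open scoped Classical

/-- A matching of the weighted graph with edge weights `lam`, inside the vertex set `A`:
a set of pairs `(j,k)` with `j < k`, `lam j k ≠ 0`, endpoints in `A`,
no two pairs sharing a vertex. -/
def IsMatching {n : ℕ} (lam : Fin n → Fin n → ℝ) (A : Finset (Fin n))
    (M : Finset (Fin n × Fin n)) : Prop :=
  (∀ e ∈ M, e.1 < e.2 ∧ lam e.1 e.2 ≠ 0 ∧ e.1 ∈ A ∧ e.2 ∈ A) ∧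
  ∀ e ∈ M, ∀ f ∈ M, e ≠ f → e.1 ≠ f.1 ∧ e.1 ≠ f.2 ∧ e.2 ≠ f.1 ∧ e.2 ≠ f.2

/-- The vertices covered by a matching. -/
def mVerts {n : ℕ} (M : Finset (Fin n × Fin n)) : Finset (Fin n) :=
  M.image Prod.fst ∪ M.image Prod.snd

/-- The finite set of matchings inside the vertex set `A`. -/
noncomputable def matchings {n : ℕ} (lam : Fin n → Fin n → ℝ) (A : Finset (Fin n)) :
    Finset (Finset (Fin n × Fin n)) :=
  Finset.univ.filter fun M => IsMatching lam A M

/-- The weighted matching polynomial of the induced weighted subgraph on the vertex set `A`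
(the matching polynomial of the empty graph is `1`). -/
noncomputable def mu {n : ℕ} (r : Fin n → ℝ) (lam : Fin n → Fin n → ℝ)
    (A : Finset (Fin n)) : Polynomial ℝ :=
  ∑ M ∈ matchings lam A,
    (∏ i ∈ A \ mVerts M, (X - C (r i))) * C (∏ e ∈ M, lam e.1 e.2)

/-- The multivariate matching polynomial evaluated at the complex numbers `x 1, …, x n`. -/
noncomputable def muC {n : ℕ} (lam : Fin n → Fin n → ℝ) (x : Fin n → ℂ) : ℂ :=
  ∑ M ∈ matchings lam (Finset.univ : Finset (Fin n)),
    (∏ i ∈ Finset.univ \ mVerts M, x i) * ∏ e ∈ M, (lam e.1 e.2 : ℂ)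

/-- The constant `B_G`: for `n ≥ 3` the maximum over vertices `j` and sets
`A ⊆ [n] ∖ {j}` with `|A| = n - 2` of `∑_{k ∈ A} (-λ_{jk})`; `-λ_{12}/4` for `n = 2`;
`0` for `n = 1`. -/
noncomputable def BG (n : ℕ) (lam : Fin n → Fin n → ℝ) : ℝ :=
  if 3 ≤ n then
    sSup {S : ℝ | ∃ j : Fin n, ∃ A : Finset (Fin n),
      j ∉ A ∧ A.card = n - 2 ∧ S = ∑ k ∈ A, -lam j k}
  else if h : n = 2 then -lam ⟨0, by omega⟩ ⟨1, by omega⟩ / 4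
  else 0

/-- `l` is a path from `i` to `j` inside the vertex set `A`: a nonempty list of distinct
vertices of `A`, starting at `i`, ending at `j`, with consecutive vertices joined by
edges of nonzero weight. -/
def IsPathIn {n : ℕ} (lam : Fin n → Fin n → ℝ) (A : Finset (Fin n)) (i j : Fin n)
    (l : List (Fin n)) : Prop :=
  l ≠ [] ∧ l.Nodup ∧ (∀ v ∈ l, v ∈ A) ∧ l.head? = some i ∧ l.getLast? = some j ∧
    l.Chain' fun u v => lam u v ≠ 0

/-- `λ_c`: the product of `-λ_e` over the edges `e` of the path `c` (equal to `1` for a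
trivial path). -/
def pathWeight {n : ℕ} (lam : Fin n → Fin n → ℝ) (l : List (Fin n)) : ℝ :=
  ((l.zip l.tail).map fun p => -lam p.1 p.2).prod

/-- A real polynomial viewed as a rational function. -/
noncomputable def toRF (p : Polynomial ℝ) : RatFunc ℝ :=
  algebraMap (Polynomial ℝ) (RatFunc ℝ) p

/-- The graph continued fraction `α_v = μ(A)/μ(A ∖ v)` as a rational function. -/
noncomputable def alpha {n : ℕ} (r : Fin n → ℝ) (lam : Fin n → Fin n → ℝ) (v : Fin n)
    (A : Finset (Fin n)) : RatFunc ℝ :=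
  toRF (mu r lam A) / toRF (mu r lam (A.erase v))

/-- `λ_{i∼j} = -(∑_{c ∈ [i→j]} λ_c · μ(A∖c)²) / μ(A∖{i,j})²` as a rational function. -/
noncomputable def lamSim {n : ℕ} (r : Fin n → ℝ) (lam : Fin n → Fin n → ℝ) (i j : Fin n)
    (A : Finset (Fin n)) : RatFunc ℝ :=
  -(∑ᶠ l ∈ {l : List (Fin n) | IsPathIn lam A i j l},
      toRF (C (pathWeight lam l) * mu r lam (A \ l.toFinset) ^ 2)) /
    toRF (mu r lam ((A.erase i).erase j)) ^ 2

/-- The value of a rational function at `θ`, taken after cancelling common factors;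
`none` encodes the value `∞` (a pole). -/
noncomputable def valAt (f : RatFunc ℝ) (θ : ℝ) : Option ℝ :=
  if f.denom.eval θ = 0 then none else some (f.num.eval θ / f.denom.eval θ)

/-- The set `0_{θ,A}` of θ-essential vertices: `m_θ(A∖v) = m_θ(A) - 1`. -/
def zeroSet {n : ℕ} (r : Fin n → ℝ) (lam : Fin n → Fin n → ℝ) (θ : ℝ)
    (A : Finset (Fin n)) : Set (Fin n) :=
  {v | v ∈ A ∧
    (mu r lam A).rootMultiplicity θ = (mu r lam (A.erase v)).rootMultiplicity θ + 1}

/-- The set `∞_{θ,A}`: `m_θ(A∖v) = m_θ(A) + 1`. -/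
def infSet {n : ℕ} (r : Fin n → ℝ) (lam : Fin n → Fin n → ℝ) (θ : ℝ)
    (A : Finset (Fin n)) : Set (Fin n) :=
  {v | v ∈ A ∧
    (mu r lam (A.erase v)).rootMultiplicity θ = (mu r lam A).rootMultiplicity θ + 1}

/-- The set `+_{θ,A}`: `m_θ(A∖v) = m_θ(A)` and `α_v(A)(θ) > 0`. -/
def plusSet {n : ℕ} (r : Fin n → ℝ) (lam : Fin n → Fin n → ℝ) (θ : ℝ)
    (A : Finset (Fin n)) : Set (Fin n) :=
  {v | v ∈ A ∧
    (mu r lam (A.erase v)).rootMultiplicity θ = (mu r lam A).rootMultiplicity θ ∧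
    ∃ t : ℝ, valAt (alpha r lam v A) θ = some t ∧ 0 < t}

/-- The set `−_{θ,A}`: `m_θ(A∖v) = m_θ(A)` and `α_v(A)(θ) < 0`. -/
def minusSet {n : ℕ} (r : Fin n → ℝ) (lam : Fin n → Fin n → ℝ) (θ : ℝ)
    (A : Finset (Fin n)) : Set (Fin n) :=
  {v | v ∈ A ∧
    (mu r lam (A.erase v)).rootMultiplicity θ = (mu r lam A).rootMultiplicity θ ∧
    ∃ t : ℝ, valAt (alpha r lam v A) θ = some t ∧ t < 0}

/-- The frontier `∂0_{θ,A}`: vertices not in `0_{θ,A}` with a neighbor in `0_{θ,A}`. -/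
def frontierZero {n : ℕ} (r : Fin n → ℝ) (lam : Fin n → Fin n → ℝ) (θ : ℝ)
    (A : Finset (Fin n)) : Set (Fin n) :=
  {v | v ∈ A ∧ v ∉ zeroSet r lam θ A ∧ ∃ w ∈ zeroSet r lam θ A, lam v w ≠ 0}

/-- The underlying simple graph: edges are the pairs with nonzero edge weight. -/
def wGraph {n : ℕ} (lam : Fin n → Fin n → ℝ) : SimpleGraph (Fin n) :=
  SimpleGraph.fromRel fun j k => lam j k ≠ 0

/-!
Deleting a vertex `v` gives `μ(A) = (x - r_v) μ(A∖v) + ∑_k λ_{vk} μ(A∖v∖k)`.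

Real roots (Heilmann–Lieb): for `Im z > 0`, induction on `A` shows that `μ(A)/μ(A∖v)` lies in the
upper half plane, since by the recursion it equals `z - r_v + ∑_k λ_{vk} / (μ(A∖v)/μ(A∖v∖k))` and
each summand has nonnegative imaginary part because `λ_{vk} ≤ 0`.

Root bound: take `s > √B_G` with `x ≥ r_j + 2s` for all `j`. On the vertex sets `A` obtained by
deleting one vertex, every vertex has weighted degree at most `B_G < s²`, and the recursion gives
inductively `μ(A)(x) ≥ s μ(A∖v)(x) > 0`. The whole graph needs one last step at a vertex of
weighted degree at most `2 B_G < 2 s²`, which still leaves `μ(G)(x) > 0`; for `n = 2`, where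
`B_G = -λ_{12}/4`, `μ(G)(x) = (x - r_1)(x - r_2) + λ_{12}` is checked directly. The lower end
follows by applying this to `-r`, as `μ_{-r}(-x) = ± μ_r(x)`.
-/

noncomputable def matchingTerm {n : ℕ} (r : Fin n → ℝ) (lam : Fin n → Fin n → ℝ)
    (A : Finset (Fin n)) (M : Finset (Fin n × Fin n)) : ℝ[X] :=
  (∏ i ∈ A \ mVerts M, (X - C (r i))) * C (∏ e ∈ M, lam e.1 e.2)

def orderedEdge {n : ℕ} (v k : Fin n) : Fin n × Fin n := (min v k, max v k)

section Matchings

variable {n : ℕ} {r : Fin n → ℝ} {lam : Fin n → Fin n → ℝ} {A : Finset (Fin n)}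
  {M : Finset (Fin n × Fin n)} {e f : Fin n × Fin n} {v k : Fin n}

lemma mu_eq_sum_matchingTerm :
    mu r lam A = ∑ M ∈ matchings lam A, matchingTerm r lam A M := rfl

@[simp]
lemma mem_matchings : M ∈ matchings lam A ↔ IsMatching lam A M := by
  simp [matchings]

lemma mem_mVerts : v ∈ mVerts M ↔ ∃ e ∈ M, e.1 = v ∨ e.2 = v := by
  simp only [mVerts, Finset.mem_union, Finset.mem_image]
  grind

lemma mVerts_insert : mVerts (insert e M) = insert e.1 (insert e.2 (mVerts M)) := by
  ext a
  simp only [mem_mVerts, Finset.mem_insert, exists_eq_or_imp]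
  grind

lemma orderedEdge_cases (v k : Fin n) :
    (orderedEdge v k).1 = v ∧ (orderedEdge v k).2 = k ∨
      (orderedEdge v k).1 = k ∧ (orderedEdge v k).2 = v := by
  rcases le_total v k with h | h <;> simp [orderedEdge, h]

lemma orderedEdge_injective (v : Fin n) : Function.Injective (orderedEdge v) := by
  intro k k' h
  rcases orderedEdge_cases v k with ⟨h1, h2⟩ | ⟨h1, h2⟩ <;>
    rcases orderedEdge_cases v k' with ⟨h1', h2'⟩ | ⟨h1', h2'⟩ <;> grind

lemma lam_orderedEdge (hsym : ∀ j k, lam j k = lam k j) (v k : Fin n) :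
    lam (orderedEdge v k).1 (orderedEdge v k).2 = lam v k := by
  rcases orderedEdge_cases v k with ⟨h1, h2⟩ | ⟨h1, h2⟩ <;> rw [h1, h2]
  exact hsym k v

lemma eq_orderedEdge_of_lt (he : e.1 < e.2) (hv : e.1 = v ∨ e.2 = v) :
    ∃ k, k ≠ v ∧ (e.1 = k ∨ e.2 = k) ∧ e = orderedEdge v k := by
  rcases hv with rfl | rfl
  · exact ⟨e.2, he.ne', Or.inr rfl, by simp [orderedEdge, he.le]⟩
  · exact ⟨e.1, he.ne, Or.inl rfl, by simp [orderedEdge, he.le]⟩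

lemma IsMatching.eq_of_common_vertex (hM : IsMatching lam A M) (he : e ∈ M) (hf : f ∈ M)
    (hve : e.1 = v ∨ e.2 = v) (hvf : f.1 = v ∨ f.2 = v) : e = f := by
  by_contra hef
  have := hM.2 e he f hf hef
  grind

lemma IsMatching.ne_of_mem_erase_erase (hM : IsMatching lam ((A.erase v).erase k) M)
    (he : e ∈ M) : e.1 ≠ v ∧ e.1 ≠ k ∧ e.2 ≠ v ∧ e.2 ≠ k := by
  obtain ⟨-, -, h1, h2⟩ := hM.1 e he
  simp only [Finset.mem_erase] at h1 h2
  tauto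

lemma IsMatching.orderedEdge_notMem (hM : IsMatching lam ((A.erase v).erase k) M) :
    orderedEdge v k ∉ M := fun he => by
  have := hM.ne_of_mem_erase_erase he
  rcases orderedEdge_cases v k with ⟨h1, h2⟩ | ⟨h1, h2⟩ <;> simp_all

lemma IsMatching.insert_orderedEdge (hsym : ∀ j k, lam j k = lam k j)
    (hM : IsMatching lam ((A.erase v).erase k) M) (hv : v ∈ A) (hk : k ∈ A) (hvk : v ≠ k)
    (hlam : lam v k ≠ 0) : IsMatching lam A (insert (orderedEdge v k) M) := by
  have hcases := orderedEdge_cases v k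
  refine ⟨fun e he => ?_, fun e he f hf hef => ?_⟩
  · rcases Finset.mem_insert.1 he with rfl | he
    · refine ⟨min_lt_max.2 hvk, (lam_orderedEdge hsym v k).symm ▸ hlam, ?_⟩
      rcases hcases with ⟨h1, h2⟩ | ⟨h1, h2⟩ <;> rw [h1, h2] <;> exact ⟨‹_›, ‹_›⟩
    · obtain ⟨hlt, hne, h1, h2⟩ := hM.1 e he
      exact ⟨hlt, hne, Finset.mem_of_mem_erase (Finset.mem_of_mem_erase h1),
        Finset.mem_of_mem_erase (Finset.mem_of_mem_erase h2)⟩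
  · rcases Finset.mem_insert.1 he with rfl | he <;> rcases Finset.mem_insert.1 hf with rfl | hf
    · exact absurd rfl hef
    · have := hM.ne_of_mem_erase_erase hf
      grind
    · have := hM.ne_of_mem_erase_erase he
      grind
    · exact hM.2 e he f hf hef

lemma IsMatching.erase_orderedEdge (hM : IsMatching lam A M) (hvk : orderedEdge v k ∈ M) :
    IsMatching lam ((A.erase v).erase k) (M.erase (orderedEdge v k)) := by
  refine ⟨fun e he => ?_, fun e he f hf => hM.2 e (Finset.mem_of_mem_erase he) f
    (Finset.mem_of_mem_erase hf)⟩
  obtain ⟨hne, he⟩ := Finset.mem_erase.1 he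
  obtain ⟨hlt, hlam, h1, h2⟩ := hM.1 e he
  have := hM.2 e he _ hvk hne
  have := orderedEdge_cases v k
  refine ⟨hlt, hlam, ?_, ?_⟩ <;> simp only [Finset.mem_erase] <;> grind

lemma matchings_filter_notMem_mVerts :
    (matchings lam A).filter (v ∉ mVerts ·) = matchings lam (A.erase v) := by
  ext M
  simp only [Finset.mem_filter, mem_matchings, IsMatching, mem_mVerts, Finset.mem_erase]
  grind

lemma matchingTerm_of_notMem_mVerts (hv : v ∈ A) (hvM : v ∉ mVerts M) :
    matchingTerm r lam A M = (X - C (r v)) * matchingTerm r lam (A.erase v) M := by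
  rw [matchingTerm, matchingTerm, Finset.erase_sdiff_comm,
    ← Finset.mul_prod_erase _ _ (Finset.mem_sdiff.2 ⟨hv, hvM⟩), mul_assoc]

lemma matchingTerm_insert_orderedEdge (hsym : ∀ j k, lam j k = lam k j)
    (hM : orderedEdge v k ∉ M) :
    matchingTerm r lam A (insert (orderedEdge v k) M)
      = C (lam v k) * matchingTerm r lam ((A.erase v).erase k) M := by
  have hverts : A \ mVerts (insert (orderedEdge v k) M) = (A.erase v).erase k \ mVerts M := by
    rw [mVerts_insert]
    rcases orderedEdge_cases v k with ⟨h1, h2⟩ | ⟨h1, h2⟩ <;> rw [h1, h2] <;> ext <;>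
      simp only [Finset.mem_sdiff, Finset.mem_insert, Finset.mem_erase] <;> tauto
  rw [matchingTerm, matchingTerm, hverts, Finset.prod_insert hM, lam_orderedEdge hsym, map_mul]
  ring

lemma matchings_filter_mem_mVerts :
    (matchings lam A).filter (v ∈ mVerts ·)
      = (A.erase v).biUnion fun k => (matchings lam A).filter (orderedEdge v k ∈ ·) := by
  ext M
  simp only [Finset.mem_filter, Finset.mem_biUnion, mem_matchings]
  constructor
  · rintro ⟨hM, hvM⟩
    obtain ⟨e, he, hve⟩ := mem_mVerts.1 hvM
    obtain ⟨hlt, -, h1, h2⟩ := hM.1 e he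
    obtain ⟨k, hkv, hke, rfl⟩ := eq_orderedEdge_of_lt hlt hve
    exact ⟨k, Finset.mem_erase.2 ⟨hkv, by rcases hke with h | h <;> rw [← h] <;> assumption⟩,
      hM, he⟩
  · rintro ⟨k, -, hM, he⟩
    refine ⟨hM, mem_mVerts.2 ⟨_, he, ?_⟩⟩
    rcases orderedEdge_cases v k with ⟨h1, -⟩ | ⟨-, h2⟩ <;> simp [*]

lemma pairwiseDisjoint_filter_orderedEdge_mem (v : Fin n) :
    (A.erase v : Set (Fin n)).PairwiseDisjoint
      fun k => (matchings lam A).filter (orderedEdge v k ∈ ·) := by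
  intro k _ k' _ hkk'
  refine Finset.disjoint_left.2 fun M hM hM' => hkk' (orderedEdge_injective v ?_)
  simp only [Finset.mem_filter, mem_matchings] at hM hM'
  refine hM.1.eq_of_common_vertex hM.2 hM'.2 (v := v) ?_ ?_
  · rcases orderedEdge_cases v k with ⟨h, -⟩ | ⟨-, h⟩ <;> simp [h]
  · rcases orderedEdge_cases v k' with ⟨h, -⟩ | ⟨-, h⟩ <;> simp [h]

lemma sum_matchingTerm_filter_orderedEdge_mem (hsym : ∀ j k, lam j k = lam k j)
    (hv : v ∈ A) (hk : k ∈ A.erase v) :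
    ∑ M ∈ (matchings lam A).filter (orderedEdge v k ∈ ·), matchingTerm r lam A M
      = C (lam v k) * mu r lam ((A.erase v).erase k) := by
  obtain ⟨hkv, hk⟩ := Finset.mem_erase.1 hk
  by_cases hlam : lam v k = 0
  · rw [hlam, map_zero, zero_mul, Finset.sum_eq_zero]
    intro M hM
    simp only [Finset.mem_filter, mem_matchings] at hM
    exact absurd (lam_orderedEdge hsym v k ▸ (hM.1.1 _ hM.2).2.1) (not_not.2 hlam)
  rw [mu_eq_sum_matchingTerm, Finset.mul_sum]
  refine (Finset.sum_nbij' (insert (orderedEdge v k)) (Finset.erase · (orderedEdge v k))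
    ?_ ?_ ?_ ?_ ?_).symm
  · intro M hM
    simp only [mem_matchings, Finset.mem_filter] at hM ⊢
    exact ⟨hM.insert_orderedEdge hsym hv hk hkv.symm hlam, Finset.mem_insert_self _ _⟩
  · intro M hM
    simp only [mem_matchings, Finset.mem_filter] at hM ⊢
    exact hM.1.erase_orderedEdge hM.2
  · intro M hM
    exact Finset.erase_insert (mem_matchings.1 hM).orderedEdge_notMem
  · intro M hM
    exact Finset.insert_erase (Finset.mem_filter.1 hM).2
  · intro M hM
    exact (matchingTerm_insert_orderedEdge hsym (mem_matchings.1 hM).orderedEdge_notMem).symm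

theorem mu_eq_of_mem (hsym : ∀ j k, lam j k = lam k j) (hv : v ∈ A) :
    mu r lam A = (X - C (r v)) * mu r lam (A.erase v)
      + ∑ k ∈ A.erase v, C (lam v k) * mu r lam ((A.erase v).erase k) := by
  rw [mu_eq_sum_matchingTerm, ← Finset.sum_filter_add_sum_filter_not _ (v ∈ mVerts ·),
    add_comm]
  congr 1
  · rw [matchings_filter_notMem_mVerts, mu_eq_sum_matchingTerm, Finset.mul_sum]
    refine Finset.sum_congr rfl fun M hM => matchingTerm_of_notMem_mVerts hv ?_
    rw [← matchings_filter_notMem_mVerts] at hM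
    exact (Finset.mem_filter.1 hM).2
  · rw [matchings_filter_mem_mVerts,
      Finset.sum_biUnion (pairwiseDisjoint_filter_orderedEdge_mem v)]
    exact Finset.sum_congr rfl fun k hk => sum_matchingTerm_filter_orderedEdge_mem hsym hv hk

end Matchings

section Roots

variable {n : ℕ} {r : Fin n → ℝ} {lam : Fin n → Fin n → ℝ} {A : Finset (Fin n)} {v : Fin n}

@[simp]
lemma mu_empty : mu r lam ∅ = 1 := by
  have : matchings lam (∅ : Finset (Fin n)) = {∅} := by
    ext M
    simp only [mem_matchings, IsMatching, Finset.notMem_empty, and_false, imp_false,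
      Finset.mem_singleton]
    refine ⟨fun h => Finset.eq_empty_of_forall_notMem fun e he => h.1 e he, ?_⟩
    rintro rfl
    simp
  simp [mu, this, mVerts]

lemma aeval_mu_eq_of_mem {S : Type*} [CommRing S] [Algebra ℝ S]
    (hsym : ∀ j k, lam j k = lam k j) (hv : v ∈ A) (z : S) :
    aeval z (mu r lam A) = (z - algebraMap ℝ S (r v)) * aeval z (mu r lam (A.erase v))
      + ∑ k ∈ A.erase v, algebraMap ℝ S (lam v k) * aeval z (mu r lam ((A.erase v).erase k)) := by
  simp [mu_eq_of_mem hsym hv, map_sum]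

lemma eval_mu_eq_of_mem (hsym : ∀ j k, lam j k = lam k j) (hv : v ∈ A) (x : ℝ) :
    (mu r lam A).eval x = (x - r v) * (mu r lam (A.erase v)).eval x
      + ∑ k ∈ A.erase v, lam v k * (mu r lam ((A.erase v).erase k)).eval x := by
  simpa using aeval_mu_eq_of_mem hsym hv x

lemma eval_neg_mu_neg (hsym : ∀ j k, lam j k = lam k j) (A : Finset (Fin n)) (x : ℝ) :
    (mu (-r) lam A).eval (-x) = (-1) ^ A.card * (mu r lam A).eval x := by
  induction A using Finset.strongInduction generalizing x with
  | _ A ih =>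
  rcases A.eq_empty_or_nonempty with rfl | ⟨v, hv⟩
  · simp
  have hcard := Finset.card_erase_add_one hv
  rw [eval_mu_eq_of_mem hsym hv, eval_mu_eq_of_mem hsym hv, ih _ (Finset.erase_ssubset hv),
    mul_add, Finset.mul_sum]
  congr 1
  · rw [← hcard, Pi.neg_apply]
    ring
  · refine Finset.sum_congr rfl fun k hk => ?_
    rw [ih _ ((Finset.erase_subset k _).trans_ssubset (Finset.erase_ssubset hv)), ← hcard,
      ← Finset.card_erase_add_one hk]
    ring

lemma im_ofReal_div_nonneg {c : ℝ} (hc : c ≤ 0) {w : ℂ} (hw : 0 ≤ w.im) :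
    0 ≤ ((c : ℂ) / w).im := by
  rw [Complex.div_im, Complex.ofReal_im, Complex.ofReal_re, zero_mul, zero_div, zero_sub,
    ← neg_div, ← neg_mul]
  exact div_nonneg (mul_nonneg (neg_nonneg.2 hc) hw) (Complex.normSq_nonneg w)

lemma aeval_mu_ne_zero_and_im_div_pos (hsym : ∀ j k, lam j k = lam k j)
    (hnonpos : ∀ j k, lam j k ≤ 0) {z : ℂ} (hz : 0 < z.im) (A : Finset (Fin n)) :
    aeval z (mu r lam A) ≠ 0 ∧
      ∀ v ∈ A, 0 < (aeval z (mu r lam A) / aeval z (mu r lam (A.erase v))).im := by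
  induction A using Finset.strongInduction with
  | _ A ih =>
  have him : ∀ v ∈ A, 0 < (aeval z (mu r lam A) / aeval z (mu r lam (A.erase v))).im := by
    intro v hv
    have hsub := Finset.erase_ssubset hv
    have hsub' : ∀ k, (A.erase v).erase k ⊂ A :=
      fun k => (Finset.erase_subset k _).trans_ssubset hsub
    have hfrac : aeval z (mu r lam A) / aeval z (mu r lam (A.erase v))
        = z - r v + ∑ k ∈ A.erase v, (lam v k : ℂ) /
          (aeval z (mu r lam (A.erase v)) / aeval z (mu r lam ((A.erase v).erase k))) := by
      rw [aeval_mu_eq_of_mem hsym hv, add_div, mul_div_cancel_right₀ _ (ih _ hsub).1,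
        Finset.sum_div]
      simp only [div_div_eq_mul_div, Complex.coe_algebraMap]
    rw [hfrac, Complex.add_im, Complex.sub_im, Complex.ofReal_im, sub_zero, Complex.im_sum]
    exact add_pos_of_pos_of_nonneg hz <| Finset.sum_nonneg fun k hk =>
      im_ofReal_div_nonneg (hnonpos v k) ((ih _ hsub).2 k hk).le
  refine ⟨?_, him⟩
  rcases A.eq_empty_or_nonempty with rfl | ⟨v, hv⟩
  · simp
  · intro h
    simpa [h] using him v hv

theorem im_eq_zero_of_aeval_mu_eq_zero (hsym : ∀ j k, lam j k = lam k j)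
    (hnonpos : ∀ j k, lam j k ≤ 0) {z : ℂ} (hz : aeval z (mu r lam A) = 0) : z.im = 0 := by
  rcases lt_trichotomy z.im 0 with h | h | h
  · refine absurd ?_ (aeval_mu_ne_zero_and_im_div_pos (r := r) hsym hnonpos
      (z := (starRingEnd ℂ) z) (by simpa using h) A).1
    rw [aeval_conj, hz, map_zero]
  · exact h
  · exact absurd hz (aeval_mu_ne_zero_and_im_div_pos hsym hnonpos h A).1

end Roots

lemma eval_mu_univ_fin_two {r : Fin 2 → ℝ} {lam : Fin 2 → Fin 2 → ℝ}
    (hsym : ∀ j k, lam j k = lam k j) (x : ℝ) :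
    (mu r lam Finset.univ).eval x = (x - r 0) * (x - r 1) + lam 0 1 := by
  have h01 : (Finset.univ : Finset (Fin 2)).erase 0 = {1} := by decide
  rw [eval_mu_eq_of_mem hsym (Finset.mem_univ 0), h01,
    eval_mu_eq_of_mem hsym (Finset.mem_singleton_self 1)]
  simp

section Bound

variable {n : ℕ} {r : Fin n → ℝ} {lam : Fin n → Fin n → ℝ} {A S T : Finset (Fin n)} {v : Fin n}

lemma sum_neg_lam_le_of_subset (hnonpos : ∀ j k, lam j k ≤ 0) (h : S ⊆ T) :
    ∑ k ∈ S, -lam v k ≤ ∑ k ∈ T, -lam v k :=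
  Finset.sum_le_sum_of_subset_of_nonneg h fun k _ _ => neg_nonneg.2 (hnonpos v k)

lemma mul_eval_mu_erase_le (hsym : ∀ j k, lam j k = lam k j) (hnonpos : ∀ j k, lam j k ≤ 0)
    {s x D : ℝ} (hv : v ∈ A) (hD : ∑ k ∈ A.erase v, -lam v k ≤ D)
    (hpos : 0 ≤ (mu r lam (A.erase v)).eval x)
    (hle : ∀ k ∈ A.erase v,
      s * (mu r lam ((A.erase v).erase k)).eval x ≤ (mu r lam (A.erase v)).eval x) :
    (s * (x - r v) - D) * (mu r lam (A.erase v)).eval x ≤ s * (mu r lam A).eval x := by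
  set P := (mu r lam (A.erase v)).eval x
  have hsum : s * ∑ k ∈ A.erase v, -lam v k * (mu r lam ((A.erase v).erase k)).eval x
      ≤ D * P :=
    calc _ = ∑ k ∈ A.erase v, -lam v k * (s * (mu r lam ((A.erase v).erase k)).eval x) := by
          rw [Finset.mul_sum]
          exact Finset.sum_congr rfl fun k _ => by ring
      _ ≤ ∑ k ∈ A.erase v, -lam v k * P :=
          Finset.sum_le_sum fun k hk => mul_le_mul_of_nonneg_left (hle k hk)
            (neg_nonneg.2 (hnonpos v k))
      _ = (∑ k ∈ A.erase v, -lam v k) * P := (Finset.sum_mul _ _ _).symm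
      _ ≤ D * P := mul_le_mul_of_nonneg_right hD hpos
  rw [eval_mu_eq_of_mem hsym hv]
  simp only [neg_mul, Finset.sum_neg_distrib] at hsum
  linarith

lemma eval_mu_pos_and_le (hsym : ∀ j k, lam j k = lam k j) (hnonpos : ∀ j k, lam j k ≤ 0)
    {s x : ℝ} (hs : 0 < s) (hx : ∀ i, r i + 2 * s ≤ x) (A : Finset (Fin n))
    (hdeg : ∀ v ∈ A, ∑ k ∈ A.erase v, -lam v k ≤ s ^ 2) :
    0 < (mu r lam A).eval x ∧
      ∀ v ∈ A, s * (mu r lam (A.erase v)).eval x ≤ (mu r lam A).eval x := by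
  induction A using Finset.strongInduction with
  | _ A ih =>
  have hdeg' : ∀ v ∈ A, ∀ w ∈ A.erase v, ∑ k ∈ (A.erase v).erase w, -lam w k ≤ s ^ 2 :=
    fun v _ w hw => (sum_neg_lam_le_of_subset hnonpos
      (Finset.erase_subset_erase w (A.erase_subset v))).trans (hdeg w (Finset.mem_of_mem_erase hw))
  have hle : ∀ v ∈ A, s * (mu r lam (A.erase v)).eval x ≤ (mu r lam A).eval x := by
    intro v hv
    obtain ⟨hpos, hle⟩ := ih _ (Finset.erase_ssubset hv) (hdeg' v hv)
    have hstep := mul_eval_mu_erase_le hsym hnonpos hv (hdeg v hv) hpos.le hle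
    have hcoef : s ^ 2 ≤ s * (x - r v) - s ^ 2 := by nlinarith [hx v]
    refine le_of_mul_le_mul_left ?_ hs
    nlinarith [mul_le_mul_of_nonneg_right hcoef hpos.le]
  refine ⟨?_, hle⟩
  rcases A.eq_empty_or_nonempty with rfl | ⟨v, hv⟩
  · simp
  · obtain ⟨hpos, -⟩ := ih _ (Finset.erase_ssubset hv) (hdeg' v hv)
    exact (mul_pos hs hpos).trans_le (hle v hv)

lemma sum_neg_lam_le_BG (h3 : 3 ≤ n) (hnonpos : ∀ j k, lam j k ≤ 0) (hvS : v ∉ S)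
    (hS : S.card ≤ n - 2) : ∑ k ∈ S, -lam v k ≤ BG n lam := by
  have hsub : S ⊆ Finset.univ.erase v := fun k hk =>
    Finset.mem_erase.2 ⟨fun h => hvS (h ▸ hk), Finset.mem_univ k⟩
  obtain ⟨T, hST, hT, hTcard⟩ := Finset.exists_subsuperset_card_eq hsub hS (by simp; omega)
  have hbdd : BddAbove {S : ℝ | ∃ j : Fin n, ∃ A : Finset (Fin n),
      j ∉ A ∧ A.card = n - 2 ∧ S = ∑ k ∈ A, -lam j k} := by
    refine (Set.finite_range fun p : Fin n × Finset (Fin n) => ∑ k ∈ p.2, -lam p.1 k)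
      |>.subset ?_ |>.bddAbove
    rintro _ ⟨j, A, -, -, rfl⟩
    exact ⟨(j, A), rfl⟩
  rw [BG, if_pos h3]
  exact (sum_neg_lam_le_of_subset hnonpos hST).trans
    (le_csSup hbdd ⟨v, T, fun hv => Finset.notMem_erase v _ (hT hv), hTcard, rfl⟩)

lemma sum_neg_lam_univ_erase_le (h3 : 3 ≤ n) (hnonpos : ∀ j k, lam j k ≤ 0) (v : Fin n) :
    ∑ k ∈ Finset.univ.erase v, -lam v k ≤ 2 * BG n lam := by
  obtain ⟨k, hk⟩ : (Finset.univ.erase v).Nonempty := by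
    rw [← Finset.card_pos, Finset.card_erase_of_mem (Finset.mem_univ v)]
    simp only [Finset.card_univ, Fintype.card_fin]
    omega
  rw [← Finset.add_sum_erase _ _ hk, two_mul]
  refine add_le_add ?_ (sum_neg_lam_le_BG h3 hnonpos ?_ ?_)
  · simpa using sum_neg_lam_le_BG (S := {k}) h3 hnonpos (by simpa [eq_comm] using hk)
      (by simp; omega)
  · exact fun h => Finset.notMem_erase v _ (Finset.mem_of_mem_erase h)
  · rw [Finset.card_erase_of_mem hk, Finset.card_erase_of_mem (Finset.mem_univ v)]
    simp only [Finset.card_univ, Fintype.card_fin]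
    omega

theorem eval_mu_univ_pos (hsym : ∀ j k, lam j k = lam k j) (hnonpos : ∀ j k, lam j k ≤ 0)
    {s x : ℝ} (hs : √(BG n lam) < s) (hx : ∀ i, r i + 2 * s ≤ x) :
    0 < (mu r lam Finset.univ).eval x := by
  have hs0 : 0 < s := (Real.sqrt_nonneg _).trans_lt hs
  have hB : BG n lam < s ^ 2 := (Real.sqrt_lt' hs0).1 hs
  rcases (by omega : n ≤ 1 ∨ n = 2 ∨ 3 ≤ n) with h1 | rfl | h3
  · refine (eval_mu_pos_and_le hsym hnonpos hs0 hx _ fun v _ => ?_).1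
    have : Finset.univ.erase v = ∅ := Finset.eq_empty_of_forall_notMem fun k hk =>
      Finset.ne_of_mem_erase hk (Fin.ext (by omega))
    simp only [this, Finset.sum_empty]
    positivity
  · have hB2 : BG 2 lam = -lam 0 1 / 4 := by simp [BG]
    rw [eval_mu_univ_fin_two hsym]
    have := hx 0
    have := hx 1
    nlinarith
  · set v : Fin n := ⟨0, by omega⟩
    obtain ⟨hpos, hle⟩ := eval_mu_pos_and_le hsym hnonpos hs0 hx (Finset.univ.erase v)
      fun w hw => (sum_neg_lam_le_BG h3 hnonpos (Finset.notMem_erase w _) (by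
        rw [Finset.card_erase_of_mem hw, Finset.card_erase_of_mem (Finset.mem_univ v)]
        simp only [Finset.card_univ, Fintype.card_fin]
        omega)).trans hB.le
    have hstep := mul_eval_mu_erase_le hsym hnonpos (Finset.mem_univ v)
      (sum_neg_lam_univ_erase_le h3 hnonpos v) hpos.le hle
    have hxv := hx v
    refine pos_of_mul_pos_right ((mul_pos ?_ hpos).trans_le hstep) hs0.le
    nlinarith

end Bound

theorem stmt_1_general (n : ℕ) (hn : 0 < n) (r : Fin n → ℝ) (lam : Fin n → Fin n → ℝ)
    (hsym : ∀ j k, lam j k = lam k j) (hnonpos : ∀ j k, lam j k ≤ 0) :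
    ∀ z : ℂ, (Polynomial.aeval z) (mu r lam (Finset.univ : Finset (Fin n))) = 0 →
      z.im = 0 ∧
      Finset.univ.inf' (Finset.univ_nonempty_iff.mpr ⟨⟨0, hn⟩⟩) r
          - 2 * Real.sqrt (BG n lam) ≤ z.re ∧
      z.re ≤ Finset.univ.sup' (Finset.univ_nonempty_iff.mpr ⟨⟨0, hn⟩⟩) r
          + 2 * Real.sqrt (BG n lam) := by
  intro z hz
  have : Nonempty (Fin n) := ⟨⟨0, hn⟩⟩
  have him : z.im = 0 := im_eq_zero_of_aeval_mu_eq_zero hsym hnonpos hz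
  have hroot : (mu r lam Finset.univ).eval z.re = 0 := by
    rw [← Complex.re_add_im z, him, Complex.ofReal_zero, zero_mul, add_zero,
      ← Complex.coe_algebraMap, aeval_algebraMap_apply, coe_aeval_eq_eval] at hz
    simpa using hz
  refine ⟨him, ?_, ?_⟩
  · by_contra! h
    have hpos := eval_mu_univ_pos (r := -r) hsym hnonpos (x := -z.re)
      (s := (Finset.univ.inf' Finset.univ_nonempty r - z.re) / 2) (by linarith) fun i => by
        have := Finset.inf'_le r (Finset.mem_univ i)
        simp only [Pi.neg_apply]
        linarith
    rw [eval_neg_mu_neg hsym, hroot, mul_zero] at hpos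
    exact hpos.false
  · by_contra! h
    refine (eval_mu_univ_pos hsym hnonpos (x := z.re)
      (s := (z.re - Finset.univ.sup' Finset.univ_nonempty r) / 2) (by linarith) fun i => ?_).ne' hroot
    linarith [Finset.le_sup' r (Finset.mem_univ i)]

/-- all roots of the weighted matching polynomial `μ(G)` are real and lie in
`[min_j r_j − 2√(B_G), max_j r_j + 2√(B_G)]`. -/
theorem stmt_1 (n : ℕ) (hn : 0 < n) (r : Fin n → ℝ) (lam : Fin n → Fin n → ℝ)
    (hsym : ∀ j k, lam j k = lam k j) (hnonpos : ∀ j k, lam j k ≤ 0)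
    (hdiag : ∀ i, lam i i = 0) :
    ∀ z : ℂ, (Polynomial.aeval z) (mu r lam (Finset.univ : Finset (Fin n))) = 0 →
      z.im = 0 ∧
      Finset.univ.inf' (Finset.univ_nonempty_iff.mpr ⟨⟨0, hn⟩⟩) r
          - 2 * Real.sqrt (BG n lam) ≤ z.re ∧
      z.re ≤ Finset.univ.sup' (Finset.univ_nonempty_iff.mpr ⟨⟨0, hn⟩⟩) r
          + 2 * Real.sqrt (BG n lam) :=
  stmt_1_general n hn r lam hsym hnonpos
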